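/- arXiv:math/0606610 — 2 statements merged into one kernel-verified Lean document; each statement's English description precedes it below -/
import Mathlib

section
/- For every nonzero real number z, ∑_{n ∈ NR} e^{nz} = (1/(e^{az} − 1))·∑_{n ∈ N₀} e^{nz} − 1/(e^{z} − 1). -/
/-!
The representable numbers form a set `S` containing `0` and closed under `n ↦ n + A`. Hence for
`n ≥ A`, `n - A` is a gap exactly when `n` is a gap or `n ∈ N`, while every `n < A` is `0`, a gap,
or in `N`. This is the disjoint decomposition `(NR + A) ⊔ [0, A) = NR ⊔ N₀`; weighting `n` by
`x ^ n` gives `(x ^ A - 1) ∑_{NR} x ^ n + (x ^ A - 1) / (x - 1) = ∑_{N₀} x ^ n`, and `x = e ^ z`.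
-/

open Finset

section GapSet

variable {S : Set ℕ} {A : ℕ} {NR N : Finset ℕ}

theorem image_add_right_union_range_eq (hA : 0 < A) (h0 : 0 ∈ S)
    (hadd : ∀ n ∈ S, n + A ∈ S) (hNR : ∀ n, n ∈ NR ↔ 0 < n ∧ n ∉ S)
    (hN : ∀ n, n ∈ N ↔ 0 < n ∧ n ∈ S ∧ ¬(A ≤ n ∧ n - A ∈ S)) :
    NR.image (· + A) ∪ range A = NR ∪ insert 0 N := by
  ext n
  simp only [mem_union, mem_image, mem_range, mem_insert, hNR, hN]
  rcases lt_or_ge n A with hnA | hnA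
  · have := Nat.eq_zero_or_pos n
    have := not_le.2 hnA
    tauto
  · obtain ⟨m, rfl⟩ := Nat.exists_eq_add_of_le' hnA
    have hshift : (∃ m', (0 < m' ∧ m' ∉ S) ∧ m' + A = m + A) ↔ 0 < m ∧ m ∉ S :=
      ⟨fun ⟨m', hm', h⟩ => (Nat.add_right_cancel h) ▸ hm', fun hm => ⟨m, hm, rfl⟩⟩
    rw [hshift, or_iff_left (not_lt.2 hnA), Nat.add_sub_cancel]
    by_cases hmS : m ∈ S
    · have := hadd m hmS
      have : m + A ≠ 0 := by omega
      tauto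
    · have hm : 0 < m := Nat.pos_of_ne_zero fun hm0 => hmS (hm0 ▸ h0)
      by_cases hmAS : m + A ∈ S <;> simp [hm, hmS, hmAS]

theorem sum_pow_mul_sub_one_add_geom_sum {R : Type*} [CommRing R] (x : R) (hA : 0 < A)
    (h0 : 0 ∈ S) (hadd : ∀ n ∈ S, n + A ∈ S) (hNR : ∀ n, n ∈ NR ↔ 0 < n ∧ n ∉ S)
    (hN : ∀ n, n ∈ N ↔ 0 < n ∧ n ∈ S ∧ ¬(A ≤ n ∧ n - A ∈ S)) :
    (∑ n ∈ NR, x ^ n) * (x ^ A - 1) + ∑ i ∈ range A, x ^ i = ∑ n ∈ insert 0 N, x ^ n := by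
  have hshift_disj : Disjoint (NR.image (· + A)) (range A) := by
    simp only [disjoint_left, mem_image, mem_range]
    rintro _ ⟨m, _, rfl⟩
    omega
  have hgap_disj : Disjoint NR (insert 0 N) := by
    simp only [disjoint_left, mem_insert, hNR, hN]
    rintro n ⟨hn, hnS⟩ (rfl | ⟨-, hnS', -⟩)
    exacts [hn.ne rfl, hnS hnS']
  have hsplit := congrArg (∑ n ∈ ·, x ^ n)
    (image_add_right_union_range_eq hA h0 hadd hNR hN)
  simp only [sum_union hshift_disj, sum_union hgap_disj,
    sum_image fun _ _ _ _ => Nat.add_right_cancel, pow_add, ← sum_mul] at hsplit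
  linear_combination hsplit

theorem sum_pow_eq_div_sub_div {K : Type*} [Field K] {x : K} (hx : x ≠ 1) (hxA : x ^ A ≠ 1)
    (hA : 0 < A) (h0 : 0 ∈ S) (hadd : ∀ n ∈ S, n + A ∈ S)
    (hNR : ∀ n, n ∈ NR ↔ 0 < n ∧ n ∉ S)
    (hN : ∀ n, n ∈ N ↔ 0 < n ∧ n ∈ S ∧ ¬(A ≤ n ∧ n - A ∈ S)) :
    ∑ n ∈ NR, x ^ n = 1 / (x ^ A - 1) * ∑ n ∈ insert 0 N, x ^ n - 1 / (x - 1) := by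
  have hx' : x - 1 ≠ 0 := sub_ne_zero.2 hx
  have hxA' : x ^ A - 1 ≠ 0 := sub_ne_zero.2 hxA
  field_simp
  linear_combination (x - 1) * sum_pow_mul_sub_one_add_geom_sum x hA h0 hadd hNR hN
    - geom_sum_mul x A

end GapSet

section Representable

variable {k : ℕ} (a : Fin k → ℕ)

def IsRepresentable (n : ℕ) : Prop :=
  ∃ x : Fin k → ℕ, n = ∑ i, a i * x i

variable {a}

theorem isRepresentable_zero : IsRepresentable a 0 :=
  ⟨0, by simp⟩

theorem IsRepresentable.add_generator {n : ℕ} (hn : IsRepresentable a n) (i : Fin k) :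
    IsRepresentable a (n + a i) := by
  obtain ⟨x, rfl⟩ := hn
  refine ⟨x + Pi.single i 1, ?_⟩
  simp [mul_add, sum_add_distrib, Pi.single_apply]

theorem exists_intCast_sub_eq_sum_iff (m A : ℕ) :
    (∃ x : Fin k → ℕ, (m : ℤ) - A = ∑ i, (a i : ℤ) * x i) ↔
      A ≤ m ∧ IsRepresentable a (m - A) := by
  simp only [IsRepresentable, ← exists_and_left]
  refine exists_congr fun x => ?_
  have hcast : ∑ i, (a i : ℤ) * x i = ((∑ i, a i * x i : ℕ) : ℤ) := by push_cast; rfl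
  rw [hcast]
  omega

end Representable

theorem egf_NR_general
    (k : ℕ) (a : Fin k → ℕ)
    (A : ℕ) (hA : 2 ≤ A) (hAmem : ∃ i, a i = A)
    (NR N : Finset ℕ)
    (hNR : ∀ n : ℕ, n ∈ NR ↔ 0 < n ∧ ¬ ∃ x : Fin k → ℕ, n = ∑ i, a i * x i)
    (hN : ∀ n : ℕ, n ∈ N ↔ 0 < n ∧ (∃ x : Fin k → ℕ, n = ∑ i, a i * x i) ∧
      ¬ ∃ x : Fin k → ℕ, (n : ℤ) - (A : ℤ) = ∑ i, (a i : ℤ) * (x i : ℤ))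
    (z : ℝ) (hz : z ≠ 0) :
    ∑ n ∈ NR, Real.exp (n * z) =
      (1 / (Real.exp (A * z) - 1)) * ∑ n ∈ insert 0 N, Real.exp (n * z)
        - 1 / (Real.exp z - 1) := by
  obtain ⟨i, rfl⟩ := hAmem
  have hA_pos : 0 < a i := by omega
  have hN' : ∀ n, n ∈ N ↔ 0 < n ∧ IsRepresentable a n ∧
      ¬(a i ≤ n ∧ IsRepresentable a (n - a i)) := fun n => by
    rw [hN, exists_intCast_sub_eq_sum_iff]
    rfl
  have hx : Real.exp z ≠ 1 := by rwa [Ne, Real.exp_eq_one_iff]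
  have hxA : Real.exp z ^ a i ≠ 1 := by
    rw [← Real.exp_nat_mul, Ne, Real.exp_eq_one_iff]
    exact mul_ne_zero (Nat.cast_ne_zero.2 hA_pos.ne') hz
  simp only [Real.exp_nat_mul]
  exact sum_pow_eq_div_sub_div (S := {n | IsRepresentable a n}) hx hxA hA_pos
    isRepresentable_zero (fun n hn => hn.add_generator i) hNR hN'

/-- Equation (3.3): the exponential generating formula of the set `NR`:
for nonzero real `z`,
`∑_{n ∈ NR} e^{nz} = (1/(e^{az} − 1))·∑_{n ∈ N₀} e^{nz} − 1/(e^z − 1)`,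
where `N₀ = N ∪ {0}`. -/
theorem egf_NR
    (k : ℕ) (a : Fin k → ℕ) (ha : ∀ i, 0 < a i)
    (hgcd : Finset.univ.gcd a = 1)
    (A : ℕ) (hA : 2 ≤ A) (hAmem : ∃ i, a i = A)
    (NR N : Finset ℕ)
    (hNR : ∀ n : ℕ, n ∈ NR ↔ 0 < n ∧ ¬ ∃ x : Fin k → ℕ, n = ∑ i, a i * x i)
    (hN : ∀ n : ℕ, n ∈ N ↔ 0 < n ∧ (∃ x : Fin k → ℕ, n = ∑ i, a i * x i) ∧
      ¬ ∃ x : Fin k → ℕ, (n : ℤ) - (A : ℤ) = ∑ i, (a i : ℤ) * (x i : ℤ))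
    (z : ℝ) (hz : z ≠ 0) :
    ∑ n ∈ NR, Real.exp (n * z) =
      (1 / (Real.exp (A * z) - 1)) * ∑ n ∈ insert 0 N, Real.exp (n * z)
        - 1 / (Real.exp z - 1) :=
  egf_NR_general k a A hA hAmem NR N hNR hN z hz
end

section
/- For two coprime integers a, b ≥ 2 and every integer m ≥ 1, the Sylvester sum satisfies m·S_{m−1} = a^{m−1}·∑_{n=0}^{a−1} B_m(nb/a) − B_m, where B_m(x) is the m-th Bernoulli polynomial and B_m = B_m(0). -/
/-!
Write each positive integer as `n = (j b mod a) + a k` with `0 ≤ j < a`; as `j ↦ j b mod a`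
permutes the residues mod `a`, this is a bijection. Such an `n` is representable exactly when
`n ≥ j b`, i.e. when `k ≥ ⌊j b / a⌋`, so the non-representable numbers form `a` arithmetic
progressions of step `a`. The power sum over each progression telescopes through
`B_m(x + 1) - B_m(x) = m x^(m-1)` to `a^(m-1) (B_m(j b / a) - B_m((j b mod a) / a))`; summing over
`j` and applying Raabe's multiplication theorem `a^(m-1) ∑_{r<a} B_m(r / a) = B_m` to the second
terms gives the formula.
-/

open Finset

namespace Polynomial

theorem eq_C_eval_zero_of_eval_add_one {R : Type*} [CommRing R] [IsDomain R] [CharZero R]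
    {p : R[X]} (h : ∀ x, p.eval (x + 1) = p.eval x) : p = C (p.eval 0) := by
  have hnat : ∀ n : ℕ, p.eval (n : R) = p.eval 0 := by
    intro n
    induction n with
    | zero => simp
    | succ n ih => rw [Nat.cast_succ, h, ih]
  refine eq_of_infinite_eval_eq _ _ ((Set.infinite_range_of_injective Nat.cast_injective).mono ?_)
  rintro _ ⟨n, rfl⟩
  simp [hnat]

theorem bernoulli_succ_eval_add_nat (m : ℕ) (x : ℚ) (N : ℕ) :
    (bernoulli (m + 1)).eval (x + N) =
      (bernoulli (m + 1)).eval x + (m + 1) * ∑ k ∈ range N, (x + k) ^ m := by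
  induction N with
  | zero => simp
  | succ N ih =>
    rw [Nat.cast_succ, ← add_assoc, add_comm _ (1 : ℚ), bernoulli_eval_one_add, ih,
      sum_range_succ]
    push_cast
    ring

theorem sum_range_pow_add_mul_eq {a : ℚ} (ha : a ≠ 0) (r : ℚ) (m N : ℕ) :
    (m + 1) * ∑ k ∈ range N, (r + a * k) ^ m =
      a ^ m * ((bernoulli (m + 1)).eval (r / a + N) - (bernoulli (m + 1)).eval (r / a)) := by
  have hterm : ∀ k : ℕ, (r + a * k) ^ m = a ^ m * (r / a + k) ^ m := fun k => by
    rw [← mul_pow]; congr 1; field_simp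
  simp only [hterm, ← mul_sum, bernoulli_succ_eval_add_nat]
  ring

theorem sum_range_eval_add_one_div_sub {a : ℕ} (ha : (a : ℚ) ≠ 0) (p : ℚ[X]) (x : ℚ) :
    ∑ r ∈ range a, p.eval ((x + 1 + r) / a) - ∑ r ∈ range a, p.eval ((x + r) / a) =
      p.eval (x / a + 1) - p.eval (x / a) := by
  have hshift : ∀ r : ℕ, (x + 1 + r) / a = (x + (r + 1 : ℕ)) / a := fun r => by
    push_cast; ring
  rw [← sum_sub_distrib]
  simp only [hshift]
  rw [sum_range_sub (fun r : ℕ => p.eval ((x + r) / a))]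
  simp only [CharP.cast_eq_zero, add_zero, add_div, div_self ha]

/-- Raabe's multiplication theorem. -/
theorem bernoulli_succ_eval_eq_pow_mul_sum {a : ℕ} (ha : 0 < a) (m : ℕ) (x : ℚ) :
    (bernoulli (m + 1)).eval x =
      (a : ℚ) ^ m * ∑ r ∈ range a, (bernoulli (m + 1)).eval ((x + r) / a) := by
  have ha' : (a : ℚ) ≠ 0 := by positivity
  -- `Q` is the same difference one degree up: it is 1-periodic, hence constant, and its
  -- derivative is `(m + 2)` times the difference we want to vanish.
  set L : ℕ → ℚ[X] := fun r => C (a : ℚ)⁻¹ * (X + C (r : ℚ)) with hL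
  set Q : ℚ[X] := C ((a : ℚ) ^ (m + 1)) * ∑ r ∈ range a, (bernoulli (m + 2)).comp (L r)
    - bernoulli (m + 2) with hQ
  have hQeval : ∀ y : ℚ, Q.eval y = (a : ℚ) ^ (m + 1) *
      ∑ r ∈ range a, (bernoulli (m + 2)).eval ((y + r) / a) - (bernoulli (m + 2)).eval y := by
    intro y
    simp [hQ, hL, eval_finsetSum, div_eq_inv_mul]
  have hstep : ∀ y : ℚ, (bernoulli (m + 2)).eval (y + 1) =
      (bernoulli (m + 2)).eval y + (m + 2) * y ^ (m + 1) := fun y => by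
    rw [add_comm, bernoulli_eval_one_add]; push_cast; ring_nf
  have hperiodic : ∀ y, Q.eval (y + 1) = Q.eval y := by
    intro y
    have hshift := sum_range_eval_add_one_div_sub ha' (bernoulli (m + 2)) y
    rw [hstep] at hshift
    have hpow : (a : ℚ) ^ (m + 1) * (y / a) ^ (m + 1) = y ^ (m + 1) := by
      rw [← mul_pow, mul_div_cancel₀ _ ha']
    rw [hQeval, hQeval, hstep]
    linear_combination (a : ℚ) ^ (m + 1) * hshift + (m + 2 : ℚ) * hpow
  have hderiv : (derivative Q).eval x = (m + 2) * ((a : ℚ) ^ m *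
      ∑ r ∈ range a, (bernoulli (m + 1)).eval ((x + r) / a) - (bernoulli (m + 1)).eval x) := by
    simp only [hQ, derivative_sub, derivative_mul, derivative_C, zero_mul, zero_add,
      derivative_sum, derivative_comp, derivative_bernoulli_add_one, hL]
    simp only [map_pow, map_natCast, derivative_add, derivative_X, derivative_natCast, add_zero,
      mul_one, Nat.cast_add, Nat.cast_one, mul_comp, add_comp, natCast_comp, one_comp, ← mul_sum,
      eval_sub, eval_mul, eval_pow, eval_natCast, eval_C, eval_add, eval_one, eval_finsetSum,
      eval_comp, eval_X, div_eq_inv_mul]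
    field_simp
    ring
  rw [eq_C_eval_zero_of_eval_add_one hperiodic, derivative_C, eval_zero, eq_comm] at hderiv
  exact (sub_eq_zero.mp ((mul_eq_zero.mp hderiv).resolve_left (by positivity))).symm

end Polynomial

namespace Nat.Coprime

variable {a b : ℕ}

theorem eq_of_mul_mod_eq (hab : a.Coprime b) {j j' : ℕ} (hj : j < a) (hj' : j' < a)
    (h : j * b % a = j' * b % a) : j = j' := by
  have := Nat.ModEq.cancel_right_of_coprime hab h
  rwa [Nat.ModEq, Nat.mod_eq_of_lt hj, Nat.mod_eq_of_lt hj'] at this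

theorem image_mul_mod_range (hab : a.Coprime b) :
    (range a).image (fun j => j * b % a) = range a := by
  refine eq_of_subset_of_card_le (fun r hr => ?_) (Finset.card_image_of_injOn
    fun j hj j' hj' h => hab.eq_of_mul_mod_eq (mem_range.mp hj) (mem_range.mp hj') h).ge
  obtain ⟨j, hj, rfl⟩ := mem_image.mp hr
  exact mem_range.mpr (Nat.mod_lt _ (pos_of_ne_zero (by rintro rfl; simp at hj)))

theorem sum_range_mul_mod {M : Type*} [AddCommMonoid M] (hab : a.Coprime b) (f : ℕ → M) :
    ∑ j ∈ range a, f (j * b % a) = ∑ r ∈ range a, f r := by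
  conv_rhs => rw [← hab.image_mul_mod_range]
  exact (sum_image fun j hj j' hj' h =>
    hab.eq_of_mul_mod_eq (mem_range.mp hj) (mem_range.mp hj') h).symm

theorem exists_add_mul_iff_div_le (hab : a.Coprime b) {j : ℕ} (hj : j < a) (k : ℕ) :
    (∃ x y, j * b % a + a * k = a * x + b * y) ↔ j * b / a ≤ k := by
  have hdiv := Nat.mod_add_div (j * b) a
  constructor
  · rintro ⟨x, y, hxy⟩
    have hmod : b * y ≡ b * j [MOD a] := by
      calc b * y ≡ a * x + b * y [MOD a] := by simp [Nat.ModEq]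
        _ = j * b % a + a * k := hxy.symm
        _ ≡ b * j [MOD a] := by simp [Nat.ModEq, Nat.add_mul_mod_self_left, mul_comm]
    have hyj : y % a = j := by
      have := Nat.ModEq.cancel_left_of_coprime hab hmod
      rwa [Nat.ModEq, Nat.mod_eq_of_lt hj] at this
    have hjy : j * b ≤ b * y := mul_comm b j ▸ Nat.mul_le_mul_left b (hyj ▸ Nat.mod_le y a)
    by_contra! hk
    have : a * k < a * (j * b / a) := Nat.mul_lt_mul_of_pos_left hk (by omega)
    omega
  · intro hk
    refine ⟨k - j * b / a, j, ?_⟩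
    have : a * (j * b / a) ≤ a * k := Nat.mul_le_mul_left a hk
    rw [Nat.mul_sub, mul_comm b j]
    omega

theorem not_representable_iff (hab : a.Coprime b) (ha : 0 < a) (n : ℕ) :
    (0 < n ∧ ¬ ∃ x y, n = a * x + b * y) ↔
      ∃ j < a, ∃ k < j * b / a, j * b % a + a * k = n := by
  constructor
  · rintro ⟨-, hn⟩
    obtain ⟨j, hj, hjn⟩ :=
      mem_image.mp (hab.image_mul_mod_range ▸ mem_range.mpr (Nat.mod_lt n ha))
    have hn' : j * b % a + a * (n / a) = n := by rw [hjn, Nat.mod_add_div]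
    refine ⟨j, mem_range.mp hj, n / a, ?_, hn'⟩
    by_contra! hk
    exact hn (hn' ▸ (hab.exists_add_mul_iff_div_le (mem_range.mp hj) _).mpr hk)
  · rintro ⟨j, hj, k, hk, rfl⟩
    refine ⟨Nat.pos_of_ne_zero fun h0 => ?_, fun hrep => ?_⟩
    · exact ((hab.exists_add_mul_iff_div_le hj k).mp ⟨0, 0, by simp [h0]⟩).not_gt hk
    · exact ((hab.exists_add_mul_iff_div_le hj k).mp hrep).not_gt hk

theorem sum_not_representable {M : Type*} [AddCommMonoid M] (hab : a.Coprime b) (ha : 0 < a)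
    {NR : Finset ℕ} (hNR : ∀ n, n ∈ NR ↔ 0 < n ∧ ¬ ∃ x y, n = a * x + b * y)
    (f : ℕ → M) :
    ∑ n ∈ NR, f n = ∑ j ∈ range a, ∑ k ∈ range (j * b / a), f (j * b % a + a * k) := by
  have hNR_eq : NR = ((range a).sigma fun j => range (j * b / a)).image
      fun p => p.1 * b % a + a * p.2 := by
    ext n
    rw [hNR, hab.not_representable_iff ha]
    simp [and_assoc]
  rw [hNR_eq, sum_image, sum_sigma]
  rintro ⟨j, k⟩ hjk ⟨j', k'⟩ hjk' h
  simp only [coe_sigma, Set.mem_sigma_iff, coe_range, Set.mem_Iio] at hjk hjk' h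
  have hmod := congrArg (· % a) h
  simp only [Nat.add_mul_mod_self_left, Nat.mod_mod] at hmod
  obtain rfl := hab.eq_of_mul_mod_eq hjk.1 hjk'.1 hmod
  rw [Nat.add_left_cancel_iff, Nat.mul_left_cancel_iff ha] at h
  rw [h]

end Nat.Coprime

theorem sylvester_sum_two_variable_bernoulli_general
    (a b : ℕ) (ha : 2 ≤ a) (hab : Nat.Coprime a b)
    (NR : Finset ℕ)
    (hNR : ∀ n : ℕ, n ∈ NR ↔ 0 < n ∧ ¬ ∃ x y : ℕ, n = a * x + b * y)
    (m : ℕ) (hm : 1 ≤ m) :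
    (m : ℚ) * ∑ n ∈ NR, (n : ℚ) ^ (m - 1) =
      (a : ℚ) ^ (m - 1) *
        ∑ n ∈ Finset.range a, (Polynomial.bernoulli m).eval ((n : ℚ) * b / a)
      - bernoulli m := by
  obtain ⟨M, rfl⟩ : ∃ M, m = M + 1 := ⟨m - 1, by omega⟩
  rw [Nat.add_sub_cancel]
  set B := Polynomial.bernoulli (M + 1)
  have ha0 : 0 < a := by omega
  have haQ : (a : ℚ) ≠ 0 := by positivity
  have hblock : ∀ j : ℕ,
      ((M : ℚ) + 1) * ∑ k ∈ range (j * b / a), ((j * b % a : ℕ) + a * k : ℚ) ^ M =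
        (a : ℚ) ^ M * (B.eval ((j : ℚ) * b / a) - B.eval (((j * b % a : ℕ) : ℚ) / a)) := by
    intro j
    have hdiv : ((j * b % a : ℕ) : ℚ) + a * (j * b / a : ℕ) = j * b := by
      exact_mod_cast Nat.mod_add_div (j * b) a
    rw [Polynomial.sum_range_pow_add_mul_eq haQ, ← hdiv, add_div, mul_div_cancel_left₀ _ haQ]
  calc ((M + 1 : ℕ) : ℚ) * ∑ n ∈ NR, (n : ℚ) ^ M
      = ∑ j ∈ range a, ((M : ℚ) + 1) *
          ∑ k ∈ range (j * b / a), ((j * b % a : ℕ) + a * k : ℚ) ^ M := by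
        rw [hab.sum_not_representable ha0 hNR, mul_sum]
        push_cast
        ring
    _ = (a : ℚ) ^ M * ∑ j ∈ range a, B.eval ((j : ℚ) * b / a)
          - (a : ℚ) ^ M * ∑ r ∈ range a, B.eval ((r : ℚ) / a) := by
        simp only [hblock, mul_sub, sum_sub_distrib, mul_sum]
        rw [hab.sum_range_mul_mod fun r => (a : ℚ) ^ M * B.eval ((r : ℚ) / a)]
    _ = _ := by
        rw [← Polynomial.bernoulli_eval_zero,
          Polynomial.bernoulli_succ_eval_eq_pow_mul_sum ha0 M 0]
        simp only [zero_add, B]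

/-- Equation (4.1.x): for coprime `a, b ≥ 2` and `m ≥ 1`,
`m·S_{m−1} = a^{m−1}·∑_{n=0}^{a−1} B_m(nb/a) − B_m`,
where `B_m` is the `m`-th Bernoulli polynomial (with `B₁ = −1/2`) and
`S_{m-1} = ∑_{n ∈ NR} n^{m-1}`. -/
theorem sylvester_sum_two_variable_bernoulli
    (a b : ℕ) (ha : 2 ≤ a) (hb : 2 ≤ b) (hab : Nat.Coprime a b)
    (NR : Finset ℕ)
    (hNR : ∀ n : ℕ, n ∈ NR ↔ 0 < n ∧ ¬ ∃ x y : ℕ, n = a * x + b * y)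
    (m : ℕ) (hm : 1 ≤ m) :
    (m : ℚ) * ∑ n ∈ NR, (n : ℚ) ^ (m - 1) =
      (a : ℚ) ^ (m - 1) *
        ∑ n ∈ Finset.range a, (Polynomial.bernoulli m).eval ((n : ℚ) * b / a)
      - bernoulli m :=
  sylvester_sum_two_variable_bernoulli_general a b ha hab NR hNR m hm
end
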